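/- arXiv:1911.09973 — 3 statements merged into one kernel-verified Lean document; each statement's English description precedes it below -/
import Mathlib

section
/- For each pair of distinct letters a, b in {0,1,2}, the word φ(ab) of length 34 is irreducibly square-free, where φ(0)=01202120102120210, φ(1)=12010201210201021, φ(2)=20121012021012102. -/
/-- A word has a square if some nonempty `u` with `u ++ u` an infix. -/
def HasSquare (w : List (Fin 3)) : Prop :=
  ∃ u : List (Fin 3), u ≠ [] ∧ (u ++ u) <:+: w

def SquareFree (w : List (Fin 3)) : Prop := ¬ HasSquare w

/-- `u` occurs as a factor of the infinite word `x`. -/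
def InfFactor (u : List (Fin 3)) (x : ℕ → Fin 3) : Prop :=
  ∃ m : ℕ, ∀ i < u.length, u.getD i 0 = x (m + i)

def InfSquareFree (x : ℕ → Fin 3) : Prop :=
  ¬ ∃ u : List (Fin 3), u ≠ [] ∧ InfFactor (u ++ u) x

/-- A square-free word is irreducibly square-free if deleting any interior
letter creates a square. -/
def IrrSF (w : List (Fin 3)) : Prop :=
  SquareFree w ∧
    ∀ (w1 w2 : List (Fin 3)) (a : Fin 3),
      w = w1 ++ [a] ++ w2 → w1 ≠ [] → w2 ≠ [] → HasSquare (w1 ++ w2)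

/-- The uniform morphism φ of length 17. -/
def phi : Fin 3 → List (Fin 3) := ![[0,1,2,0,2,1,2,0,1,0,2,1,2,0,2,1,0], [1,2,0,1,0,2,0,1,2,1,0,2,0,1,0,2,1], [2,0,1,2,1,0,1,2,0,2,1,0,1,2,1,0,2]]

def phiW (w : List (Fin 3)) : List (Fin 3) := w.flatMap phi

/-! The claim is a finite check. A word has a square iff one of its suffixes splits as
`u ++ v` with `u` nonempty and a prefix of `v`, and irreducibility only asks about the
deletions at interior positions, so both properties of the six words of length 34 are
decided by evaluation in the kernel. -/

theorem hasSquare_iff_exists_tails_splits (w : List (Fin 3)) :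
    HasSquare w ↔ ∃ t ∈ w.tails, ∃ p ∈ t.inits.zip t.tails, p.1 ≠ [] ∧ p.1 <+: p.2 := by
  simp only [HasSquare, List.infix_iff_prefix_suffix, List.mem_tails, Prod.exists,
    List.mem_zip_inits_tails]
  constructor
  · rintro ⟨u, hu, t, ⟨r, rfl⟩, hsuf⟩
    exact ⟨_, hsuf, u, u ++ r, by simp, hu, List.prefix_append u r⟩
  · rintro ⟨t, hsuf, u, _, rfl, hu, r, rfl⟩
    exact ⟨u, hu, _, ⟨r, List.append_assoc u u r⟩, hsuf⟩

instance : DecidablePred HasSquare := fun w =>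
  decidable_of_iff _ (hasSquare_iff_exists_tails_splits w).symm

instance : DecidablePred SquareFree := fun w =>
  inferInstanceAs (Decidable ¬HasSquare w)

theorem irrSF_iff_hasSquare_eraseIdx (w : List (Fin 3)) :
    IrrSF w ↔ SquareFree w ∧
      ∀ k < w.length, 0 < k → k + 1 < w.length → HasSquare (w.eraseIdx k) := by
  refine and_congr_right fun _ => ⟨fun h k _ hk0 hk1 => ?_, fun h w1 w2 a hw h1 h2 => ?_⟩
  · rw [List.eraseIdx_eq_take_drop_succ]
    refine h _ _ w[k] ?_ (List.ne_nil_of_length_pos (by rw [List.length_take]; omega))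
      (List.ne_nil_of_length_pos (by rw [List.length_drop]; omega))
    rw [List.append_assoc, List.singleton_append, List.getElem_cons_drop, List.take_append_drop]
  · have hlen : w.length = w1.length + 1 + w2.length := by
      rw [hw, List.length_append, List.length_append, List.length_singleton]
    have herase : w.eraseIdx w1.length = w1 ++ w2 := by
      rw [hw, List.append_assoc, List.eraseIdx_append_of_length_le le_rfl, Nat.sub_self,
        List.singleton_append, List.eraseIdx_cons_zero]
    rw [← herase]
    have hw2 := List.length_pos_iff.mpr h2
    exact h _ (by omega) (List.length_pos_iff.mpr h1) (by omega)

instance : DecidablePred IrrSF := fun w =>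
  decidable_of_iff _ (irrSF_iff_hasSquare_eraseIdx w).symm

theorem phi_pairs_irreducibly_squareFree (a b : Fin 3) (h : a ≠ b) :
    IrrSF (phi a ++ phi b) := by
  revert a b
  decide +kernel
end

section
/- The infinite words 121·Φ and 0102·Φ are square-free, where Φ = φ^ω(0) is the fixed point of φ(0)=01202120102120210, φ(1)=12010201210201021, φ(2)=20121012021012102. -/
/-- The infinite fixed point `Φ = φ^ω(0)`. -/
def Phi (n : ℕ) : Fin 3 := ((phiW^[n+1]) [0]).getD n 0

/-- Prepend a finite word to an infinite word. -/
def prepend (w : List (Fin 3)) (x : ℕ → Fin 3) (n : ℕ) : Fin 3 :=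
  if n < w.length then w.getD n 0 else x (n - w.length)

def PeriodicOn (x : ℕ → Fin 3) (m ℓ p : ℕ) : Prop := ∀ i < ℓ, x (m + i) = x (m + i + p)

abbrev SquareAt (x : ℕ → Fin 3) (m n : ℕ) : Prop := PeriodicOn x m n n

instance (x : ℕ → Fin 3) (m ℓ p : ℕ) : Decidable (PeriodicOn x m ℓ p) :=
  inferInstanceAs (Decidable (∀ i < ℓ, x (m + i) = x (m + i + p)))

section PeriodicOn

variable {x y : ℕ → Fin 3} {m ℓ p : ℕ}

theorem periodicOn_congr (h : ∀ i < m + ℓ + p, x i = y i) :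
    PeriodicOn x m ℓ p ↔ PeriodicOn y m ℓ p :=
  forall₂_congr fun i hi => by rw [h _ (by omega), h _ (by omega)]

theorem PeriodicOn.mono (h : PeriodicOn x m ℓ p) {ℓ' : ℕ} (hℓ : ℓ' ≤ ℓ) :
    PeriodicOn x m ℓ' p :=
  fun i hi => h i (by omega)

theorem PeriodicOn.shift (h : PeriodicOn x m ℓ p) {k : ℕ} (hk : k ≤ ℓ) :
    PeriodicOn x (m + k) (ℓ - k) p := fun i hi => by
  simpa only [add_assoc] using h (k + i) (by omega)

theorem periodicOn_comp_add (k : ℕ) :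
    PeriodicOn (fun i => x (k + i)) m ℓ p ↔ PeriodicOn x (k + m) ℓ p := by
  simp only [PeriodicOn, add_assoc]

theorem periodicOn_add_const (a : Fin 3) :
    PeriodicOn (fun i => x i + a) m ℓ p ↔ PeriodicOn x m ℓ p := by
  simp only [PeriodicOn, add_left_inj]

theorem periodicOn_prepend {s : List (Fin 3)} (hm : s.length ≤ m) :
    PeriodicOn (prepend s x) m ℓ p ↔ PeriodicOn x (m - s.length) ℓ p :=
  forall₂_congr fun i _ => by
    rw [prepend, prepend, if_neg (by omega), if_neg (by omega),
      show m + i - s.length = m - s.length + i by omega,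
      show m + i + p - s.length = m - s.length + i + p by omega]

end PeriodicOn

theorem infSquareFree_of_forall_not_squareAt {x : ℕ → Fin 3}
    (h : ∀ m n, 0 < n → ¬ SquareAt x m n) : InfSquareFree x := by
  rintro ⟨u, hu, m, hux⟩
  refine h m u.length (List.length_pos_iff.mpr hu) fun i hi => ?_
  have h1 := hux i (by simp; omega)
  have h2 := hux (i + u.length) (by simp; omega)
  rw [List.getD_append _ _ _ _ hi] at h1
  rw [List.getD_append_right _ _ _ _ (by omega), Nat.add_sub_cancel] at h2
  rw [add_assoc, ← h1, ← h2]

def ofList (w : List (Fin 3)) (i : ℕ) : Fin 3 := w.getD i 0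

def phiInf (x : ℕ → Fin 3) (j : ℕ) : Fin 3 := (phi (x (j / 17))).getD (j % 17) 0

section phiInf

variable (x : ℕ → Fin 3)

theorem phi_getD_eq_add (a : Fin 3) : ∀ r < 17, (phi a).getD r 0 = a + (phi 0).getD r 0 := by
  revert a; decide

theorem phiInf_apply (j : ℕ) : phiInf x j = x (j / 17) + (phi 0).getD (j % 17) 0 :=
  phi_getD_eq_add _ _ (Nat.mod_lt _ (by norm_num))

theorem phiInf_congr {y : ℕ → Fin 3} {j : ℕ} (h : x (j / 17) = y (j / 17)) :
    phiInf x j = phiInf y j := by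
  rw [phiInf, phiInf, h]

theorem phiInf_mul_add (k : ℕ) {r : ℕ} (hr : r < 17) :
    phiInf x (17 * k + r) = (phi (x k)).getD r 0 := by
  rw [phiInf, show (17 * k + r) / 17 = k by omega, show (17 * k + r) % 17 = r by omega]

theorem phiInf_mul (k : ℕ) : phiInf x (17 * k) = x k := by
  rw [← add_zero (17 * k), phiInf_mul_add x k (by norm_num), phi_getD_eq_add _ _ (by norm_num)]
  exact add_zero _

theorem phiInf_zero : phiInf x 0 = x 0 := phiInf_mul x 0

theorem phiInf_comp_add (k j : ℕ) : phiInf (fun i => x (k + i)) j = phiInf x (17 * k + j) := by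
  rw [phiInf, phiInf, show (17 * k + j) / 17 = k + j / 17 by omega,
    show (17 * k + j) % 17 = j % 17 by omega]

theorem phiInf_add_const (a : Fin 3) : phiInf (fun i => x i + a) = fun j => phiInf x j + a := by
  funext j
  rw [phiInf_apply, phiInf_apply, add_right_comm]

end phiInf

theorem dvd_of_periodicOn_phiInf {x : ℕ → Fin 3} {a p : ℕ}
    (h : PeriodicOn (phiInf x) (17 * a) 17 p) : 17 ∣ p := by
  -- no `φ u` occurs in `φ v ++ φ w` at an offset `e` with `0 < e < 17`
  have key : ∀ e < 17, 0 < e → ∀ u v w : Fin 3, ∃ r < 17,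
      (phi u).getD r 0 ≠ (phi (if r + e < 17 then v else w)).getD ((r + e) % 17) 0 := by
    decide +kernel
  by_contra hp
  obtain ⟨r, hr, hne⟩ := key (p % 17) (Nat.mod_lt _ (by norm_num)) (by omega)
    (x a) (x (a + p / 17)) (x (a + p / 17 + 1))
  apply hne
  rw [← phiInf_mul_add x a hr, h r hr, phiInf]
  split_ifs
  · rw [show (17 * a + r + p) / 17 = a + p / 17 by omega,
      show (17 * a + r + p) % 17 = (r + p % 17) % 17 by omega]
  · rw [show (17 * a + r + p) / 17 = a + p / 17 + 1 by omega,
      show (17 * a + r + p) % 17 = (r + p % 17) % 17 by omega]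

theorem PeriodicOn.of_phiInf {x : ℕ → Fin 3} {a ℓ t : ℕ}
    (h : PeriodicOn (phiInf x) (17 * a) ℓ (17 * t)) : PeriodicOn x a ((ℓ + 16) / 17) t :=
  fun i _ => by
    have := h (17 * i) (by omega)
    rwa [← mul_add, ← mul_add, phiInf_mul, phiInf_mul] at this

theorem squareAt_of_periodicOn_phiInf {x : ℕ → Fin 3} {a p δ : ℕ}
    (h : PeriodicOn (phiInf x) (17 * a) (p - δ) p) (hδ : δ ≤ 16) (hp : 17 + δ ≤ p) :
    SquareAt x a (p / 17) := by
  obtain ⟨t, rfl⟩ := dvd_of_periodicOn_phiInf (h.mono (by omega))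
  rw [Nat.mul_div_cancel_left t (by norm_num)]
  exact h.of_phiInf.mono (by omega)

set_option synthInstance.maxSize 1000 in
theorem not_squareAt_phiInf_of_lt {x : ℕ → Fin 3}
    (hx : ∀ m n, 0 < n → m + 2 * n ≤ 5 → ¬ SquareAt x m n) {p n : ℕ} (hp : p < 17)
    (hn : 0 < n) (hn' : n < 34) : ¬ SquareAt (phiInf x) p n := by
  -- `φ` commutes with the letter shift `a ↦ a + c`, so the first letter may be taken to be `0`
  have key : ∀ b c d e : Fin 3,
      (∀ n < 3, ∀ m < 4, 0 < n → m + 2 * n ≤ 5 → ¬ SquareAt (ofList [0, b, c, d, e]) m n) →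
      ∀ p < 17, ∀ n < 34, 0 < n → ¬ SquareAt (phiInf (ofList [0, b, c, d, e])) p n := by
    decide +kernel
  set y := ofList [0, x 1 - x 0, x 2 - x 0, x 3 - x 0, x 4 - x 0]
  have hxy : ∀ i < 5, x i = y i + x 0 := by
    intro i hi
    interval_cases i <;> simp [y, ofList]
  rw [SquareAt, periodicOn_congr (y := phiInf fun i => y i + x 0)
    fun j _ => phiInf_congr x (hxy _ (by omega)), phiInf_add_const, periodicOn_add_const]
  refine key _ _ _ _ (fun n _ m _ hn hmn => ?_) p hp n hn' hn
  rw [SquareAt, ← periodicOn_add_const (x 0), ← periodicOn_congr fun i _ => hxy i (by omega)]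
  exact hx m n hn hmn

theorem phi_length (a : Fin 3) : (phi a).length = 17 := by
  fin_cases a <;> rfl

theorem phiW_length (w : List (Fin 3)) : (phiW w).length = 17 * w.length := by
  induction w with
  | nil => rfl
  | cons a w ih =>
    rw [phiW, List.flatMap_cons, List.length_append, ← phiW, ih, phi_length, List.length_cons]
    ring

theorem getD_phiW {w : List (Fin 3)} {j : ℕ} (hj : j < 17 * w.length) :
    (phiW w).getD j 0 = phiInf (ofList w) j := by
  induction w generalizing j with
  | nil => simp at hj
  | cons a w ih =>
    rw [phiW, List.flatMap_cons, ← phiW]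
    rcases lt_or_ge j 17 with hj17 | hj17
    · rw [List.getD_append _ _ _ _ (by rw [phi_length]; exact hj17), phiInf,
        Nat.div_eq_of_lt hj17, Nat.mod_eq_of_lt hj17]
      rfl
    · rw [List.getD_append_right _ _ _ _ (by rw [phi_length]; exact hj17), phi_length,
        ih (by simp at hj; omega), phiInf, phiInf, show j / 17 = (j - 17) / 17 + 1 by omega,
        show j % 17 = (j - 17) % 17 by omega]
      rfl

theorem length_iterate_phiW (k : ℕ) : (phiW^[k] [0]).length = 17 ^ k := by
  induction k with
  | zero => rfl
  | succ k ih => rw [Function.iterate_succ_apply', phiW_length, ih, pow_succ, mul_comm]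

theorem getD_iterate_phiW {k j : ℕ} (hj : j < 17 ^ k) :
    (phiW^[k] [0]).getD j 0 = phiInf^[k] (fun _ => 0) j := by
  induction k generalizing j with
  | zero => simp_all
  | succ k ih =>
    rw [Function.iterate_succ_apply', Function.iterate_succ_apply',
      getD_phiW (by rw [length_iterate_phiW, ← pow_succ']; exact hj)]
    exact phiInf_congr _ (ih (Nat.div_lt_of_lt_mul (by rwa [← pow_succ'])))

theorem iterate_phiInf_congr {x y : ℕ → Fin 3} {k j : ℕ}
    (h : x (j / 17 ^ k) = y (j / 17 ^ k)) :
    phiInf^[k] x j = phiInf^[k] y j := by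
  induction k generalizing j with
  | zero => simpa using h
  | succ k ih =>
    rw [Function.iterate_succ_apply', Function.iterate_succ_apply']
    exact phiInf_congr _ (ih (by rwa [Nat.div_div_eq_div_mul, ← pow_succ']))

theorem iterate_phiInf_of_le {k k' j : ℕ} (hj : j < 17 ^ k) (hk : k ≤ k') :
    phiInf^[k'] (fun _ => 0) j = phiInf^[k] (fun _ => 0) j := by
  obtain ⟨i, rfl⟩ := Nat.exists_eq_add_of_le hk
  clear hk
  rw [Function.iterate_add_apply]
  refine iterate_phiInf_congr ?_
  rw [Nat.div_eq_of_lt hj]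
  induction i with
  | zero => rfl
  | succ i ih => rw [Function.iterate_succ_apply', phiInf_zero, ih]

theorem Phi_eq_iterate {k j : ℕ} (hj : j < 17 ^ k) : Phi j = phiInf^[k] (fun _ => 0) j := by
  have hj' : j < 17 ^ (j + 1) :=
    (Nat.lt_pow_self (by norm_num)).trans (Nat.pow_lt_pow_right (by norm_num) (by omega))
  rw [Phi, getD_iterate_phiW hj']
  rcases le_total k (j + 1) with hk | hk
  · exact iterate_phiInf_of_le hj hk
  · exact (iterate_phiInf_of_le hj' hk).symm

theorem phiInf_Phi : phiInf Phi = Phi := by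
  funext j
  have hj : j < 17 ^ j := Nat.lt_pow_self (by norm_num)
  rw [Phi_eq_iterate (k := j + 1) (by rw [pow_succ]; omega), Function.iterate_succ_apply']
  exact phiInf_congr _ (Phi_eq_iterate (by omega))

theorem Phi_not_squareAt_of_le_five {m n : ℕ} (hn : 0 < n) (hmn : m + 2 * n ≤ 5) :
    ¬ SquareAt Phi m n := by
  have key : ∀ n < 3, ∀ m < 4, 0 < n → m + 2 * n ≤ 5 →
      ¬ SquareAt (phiInf^[1] fun _ => 0) m n := by
    decide +kernel
  rw [SquareAt, periodicOn_congr fun i _ => Phi_eq_iterate (k := 1) (by omega)]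
  exact key n (by omega) m (by omega) hn hmn

theorem Phi_not_squareAt (m n : ℕ) (hn : 0 < n) : ¬ SquareAt Phi m n := by
  intro hsq
  rcases lt_or_ge n 34 with hshort | hlong
  · have hloc : ∀ m' n', 0 < n' → m' + 2 * n' ≤ 5 →
        ¬ SquareAt (fun i => Phi (m / 17 + i)) m' n' := by
      intro m' n' hn' hmn
      rw [SquareAt, periodicOn_comp_add]
      rcases Nat.eq_zero_or_pos (m / 17) with hq | hq
      · rw [hq, zero_add]
        exact Phi_not_squareAt_of_le_five hn' hmn
      · exact Phi_not_squareAt (m / 17 + m') n' hn'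
    refine not_squareAt_phiInf_of_lt hloc (Nat.mod_lt m (by norm_num)) hn hshort ?_
    rwa [SquareAt, periodicOn_congr fun i _ => phiInf_comp_add Phi _ i, phiInf_Phi,
      periodicOn_comp_add, Nat.div_add_mod]
  · refine Phi_not_squareAt ((m + 16) / 17) (n / 17) (by omega) ?_
    refine squareAt_of_periodicOn_phiInf (δ := 17 * ((m + 16) / 17) - m) ?_ (by omega) (by omega)
    rw [phiInf_Phi]
    have := hsq.shift (k := 17 * ((m + 16) / 17) - m) (by omega)
    rwa [show m + (17 * ((m + 16) / 17) - m) = 17 * ((m + 16) / 17) by omega] at this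
termination_by m + n
decreasing_by all_goals omega

theorem prepend_Phi_infSquareFree (s : List (Fin 3)) (hs : s.length ≤ 16)
    (hshort : ∀ m < s.length, ∀ n < s.length + 17, 0 < n →
      ¬ SquareAt (prepend s (phiInf^[2] fun _ => 0)) m n) :
    InfSquareFree (prepend s Phi) := by
  refine infSquareFree_of_forall_not_squareAt fun m n hn hsq => ?_
  rcases lt_or_ge m s.length with hm | hm
  · rcases lt_or_ge n (s.length + 17) with hn' | hn'
    · refine hshort m hm n hn' hn ((periodicOn_congr fun i hi => ?_).mp hsq)
      unfold prepend
      split_ifs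
      · rfl
      · exact Phi_eq_iterate (by norm_num; omega)
    · refine Phi_not_squareAt 0 (n / 17) (by omega) ?_
      refine squareAt_of_periodicOn_phiInf (δ := s.length - m) ?_ (by omega) (by omega)
      rw [mul_zero, phiInf_Phi]
      have := hsq.shift (k := s.length - m) (by omega)
      rwa [periodicOn_prepend (by omega), show m + (s.length - m) - s.length = 0 by omega] at this
  · exact Phi_not_squareAt (m - s.length) n hn ((periodicOn_prepend hm).mp hsq)

theorem prepend_121_0102_squareFree :
    InfSquareFree (prepend [1, 2, 1] Phi) ∧
    InfSquareFree (prepend [0, 1, 0, 2] Phi) :=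
  ⟨prepend_Phi_infSquareFree _ (by decide) (by decide +kernel),
    prepend_Phi_infSquareFree _ (by decide) (by decide +kernel)⟩
end

section
/- The infinite Thue word t = τ^ω(0) is 2-irreducibly square-free: deleting any occurrence of a factor of length 2 at a position ≥ 1 creates a square in the resulting infinite word. -/
/-- The Thue morphism τ(0)=012, τ(1)=02, τ(2)=1. -/
def tau : Fin 3 → List (Fin 3) := ![[0,1,2], [0,2], [1]]

def tauW (w : List (Fin 3)) : List (Fin 3) := w.flatMap tau

/-- The Thue word `t = τ^ω(0)`: the `n`-th letter of the fixed point of τ. -/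
def thue (n : ℕ) : Fin 3 := ((tauW^[n+1]) [0]).getD n 0

/-- Deleting the two letters at positions `n, n+1` of an infinite word. -/
def delTwoAt (x : ℕ → Fin 3) (n : ℕ) (m : ℕ) : Fin 3 :=
  if m < n then x m else x (m + 2)


section Squares

variable {α : Type*}

def IsSquareAt (x : ℕ → α) (m p : ℕ) : Prop :=
  ∀ i < p, x (m + i) = x (m + p + i)

def IsOverlapAt (x : ℕ → α) (m p : ℕ) : Prop :=
  ∀ i ≤ p, x (m + i) = x (m + p + i)

instance [DecidableEq α] (x : ℕ → α) (m p : ℕ) : Decidable (IsSquareAt x m p) :=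
  inferInstanceAs (Decidable (∀ i < p, _))

/-- The bounds `s < K` and `p < K` follow from the others; they make the predicate decidable. -/
def HasSquareWithin (x : ℕ → α) (lo K : ℕ) : Prop :=
  ∃ s < K, ∃ p < K, 0 < p ∧ s + 2 * p ≤ K ∧ IsSquareAt x (lo + s) p

instance [DecidableEq α] (x : ℕ → α) (lo K : ℕ) : Decidable (HasSquareWithin x lo K) :=
  inferInstanceAs (Decidable (∃ s < K, _))

theorem HasSquareWithin.congr {x y : ℕ → α} {lo lo' K : ℕ}
    (h : ∀ i < K, x (lo + i) = y (lo' + i)) (hx : HasSquareWithin x lo K) :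
    HasSquareWithin y lo' K := by
  obtain ⟨s, hs, p, hp, hp0, hsp, hsq⟩ := hx
  refine ⟨s, hs, p, hp, hp0, hsp, fun i hi => ?_⟩
  have h₁ := h (s + i) (by omega)
  have h₂ := h (s + p + i) (by omega)
  simp only [← add_assoc] at h₁ h₂
  rw [← h₁, ← h₂, hsq i hi]

end Squares

theorem exists_infFactor_append_self_iff {x : ℕ → Fin 3} :
    (∃ u : List (Fin 3), u ≠ [] ∧ InfFactor (u ++ u) x) ↔ ∃ m p, 0 < p ∧ IsSquareAt x m p := by
  constructor
  · rintro ⟨u, hu, m, hm⟩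
    refine ⟨m, u.length, List.length_pos_iff.2 hu, fun i hi => ?_⟩
    have h₁ := hm i (by simp; omega)
    have h₂ := hm (u.length + i) (by simp; omega)
    rw [List.getD_append _ _ _ _ hi] at h₁
    rw [List.getD_append_right _ _ _ _ (by omega), Nat.add_sub_cancel_left, ← add_assoc] at h₂
    rw [← h₁, ← h₂]
  · rintro ⟨m, p, hp, hsq⟩
    set u := (List.range p).map fun i => x (m + i)
    have hu : ∀ i < p, u.getD i 0 = x (m + i) := fun i hi => by simp [u, hi]
    refine ⟨u, by simp [u]; omega, m, fun i hi => ?_⟩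
    have hlen : u.length = p := by simp [u]
    rcases lt_or_ge i p with h | h
    · rw [List.getD_append _ _ _ _ (by omega), hu i h]
    · rw [List.getD_append_right _ _ _ _ (by omega), hlen, hu _ (by simp at hi; omega),
        hsq _ (by simp at hi; omega)]
      congr 1
      omega

/-- Correct as soon as the fuel `k` is at least `n`; structural recursion keeps `thueMorse`
computable by the kernel in the `decide` checks below. -/
def thueMorseAux : ℕ → ℕ → Bool
  | 0, _ => false
  | k + 1, n => (n % 2 == 1) ^^ thueMorseAux k (n / 2)

def thueMorse (n : ℕ) : Bool := thueMorseAux n n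

theorem thueMorseAux_zero_right (k : ℕ) : thueMorseAux k 0 = false := by
  induction k with
  | zero => rfl
  | succ k ih => simp [thueMorseAux, ih]

theorem thueMorseAux_congr {k k' n : ℕ} (h : n ≤ k) (h' : n ≤ k') :
    thueMorseAux k n = thueMorseAux k' n := by
  induction k generalizing n k' with
  | zero => rw [Nat.le_zero.1 h, thueMorseAux_zero_right, thueMorseAux_zero_right]
  | succ k ih =>
    obtain _ | k' := k'
    · rw [Nat.le_zero.1 h', thueMorseAux_zero_right, thueMorseAux_zero_right]
    · simp only [thueMorseAux]
      rw [ih (k' := k') (by omega) (by omega)]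

theorem thueMorse_eq (n : ℕ) : thueMorse n = ((n % 2 == 1) ^^ thueMorse (n / 2)) := by
  obtain _ | n := n
  · rfl
  · rw [thueMorse, thueMorseAux, thueMorse, thueMorseAux_congr (by omega) le_rfl]

theorem thueMorse_two_mul (n : ℕ) : thueMorse (2 * n) = thueMorse n := by
  rw [thueMorse_eq]; simp

theorem thueMorse_two_mul_add_one (n : ℕ) : thueMorse (2 * n + 1) = !thueMorse n := by
  rw [thueMorse_eq, show (2 * n + 1) / 2 = n by omega]; simp

theorem thueMorse_succ_ne_of_even {k : ℕ} (hk : Even k) : thueMorse (k + 1) ≠ thueMorse k := by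
  obtain ⟨n, rfl⟩ := hk
  rw [← two_mul, thueMorse_two_mul_add_one, thueMorse_two_mul]
  exact Bool.not_ne_self _

theorem IsOverlapAt.halve {m q : ℕ} (h : IsOverlapAt thueMorse m (2 * q)) :
    IsOverlapAt thueMorse (m / 2) q := by
  intro j hj
  have hj' := h (2 * j) (by omega)
  rw [thueMorse_eq, thueMorse_eq (m + 2 * q + 2 * j),
    show (m + 2 * j) % 2 = (m + 2 * q + 2 * j) % 2 by omega,
    show (m + 2 * j) / 2 = m / 2 + j by omega,
    show (m + 2 * q + 2 * j) / 2 = m / 2 + q + j by omega, Bool.xor_right_inj] at hj'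
  exact hj'

theorem IsOverlapAt.thueMorse_succ_ne {m p : ℕ} (h : IsOverlapAt thueMorse m p) (hp : Odd p)
    {i : ℕ} (hi : i < p) : thueMorse (m + i + 1) ≠ thueMorse (m + i) := by
  rcases Nat.even_or_odd (m + i) with he | ho
  · exact thueMorse_succ_ne_of_even he
  · rw [h i hi.le, show m + i + 1 = m + (i + 1) by ring, h (i + 1) hi]
    exact thueMorse_succ_ne_of_even (k := m + p + i)
      (by rw [add_right_comm]; exact ho.add_odd hp)

theorem Bool.eq_xor_odd_of_forall_succ_ne {f : ℕ → Bool} {m p : ℕ}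
    (h : ∀ i < p, f (m + i + 1) ≠ f (m + i)) : f (m + p) = (f m ^^ decide (Odd p)) := by
  induction p with
  | zero => simp
  | succ p ih =>
    rw [← add_assoc, Bool.eq_not_of_ne (h p (by omega)), ih fun i hi => h i (by omega)]
    simp [Nat.odd_add_one, ← Nat.not_even_iff_odd]

theorem thueMorse_not_isOverlapAt {m p : ℕ} (hp : 0 < p) : ¬ IsOverlapAt thueMorse m p := by
  induction p using Nat.strong_induction_on generalizing m with
  | _ p ih =>
    intro h
    rcases Nat.even_or_odd p with ⟨q, rfl⟩ | hodd
    · rw [← two_mul] at h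
      exact ih q (by omega) (by omega) h.halve
    · have hend := Bool.eq_xor_odd_of_forall_succ_ne fun i hi => h.thueMorse_succ_ne hodd hi
      have h0 := h 0 (Nat.zero_le p)
      simp only [add_zero, hodd, decide_true, Bool.xor_true] at hend h0
      exact Bool.not_ne_self _ (hend ▸ h0).symm

def pairCode (f : ℕ → Bool) (n : ℕ) : Fin 3 :=
  if f n = f (n + 1) then 1 else if f n then 2 else 0

theorem pairCode_eq_pairCode_iff {f g : ℕ → Bool} {i j : ℕ} :
    pairCode f i = pairCode g j ↔
      (f i = g j ∧ f (i + 1) = g (j + 1)) ∨ (f i ≠ g j ∧ f (i + 1) = f i ∧ g (j + 1) = g j) := by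
  unfold pairCode
  cases f i <;> cases f (i + 1) <;> cases g j <;> cases g (j + 1) <;> decide

theorem IsSquareAt.isOverlapAt_of_pairCode {f : ℕ → Bool} {m p : ℕ}
    (h : IsSquareAt (pairCode f) m p) : IsOverlapAt f m p := by
  have step (i) (hi : i < p) := pairCode_eq_pairCode_iff.1 (h i hi)
  have h0 : f m = f (m + p) := by
    by_contra hne
    have hconst : ∀ i ≤ p, f (m + i) = f m ∧ f (m + p + i) = f (m + p) := by
      intro i hi
      induction i with
      | zero => simp
      | succ i ih =>
        obtain ⟨h₁, h₂⟩ := ih (by omega)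
        rcases step i (by omega) with ⟨h₃, -⟩ | ⟨-, h₄, h₅⟩
        · exact absurd (h₁ ▸ h₂ ▸ h₃) hne
        · rw [← add_assoc, ← add_assoc, h₄, h₅]
          exact ⟨h₁, h₂⟩
    exact hne (hconst p le_rfl).1.symm
  intro i hi
  induction i with
  | zero => simpa using h0
  | succ i ih =>
    rcases step i (by omega) with ⟨-, h₁⟩ | ⟨hne, -⟩
    · exact h₁
    · exact absurd (ih (by omega)) hne

theorem map_range_pairCode_thueMorse_succ (m : ℕ) :
    (List.range (2 * (m + 1) + (thueMorse (m + 1)).toNat)).map (pairCode thueMorse) =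
      (List.range (2 * m + (thueMorse m).toNat)).map (pairCode thueMorse) ++
        tau (pairCode thueMorse m) := by
  have h₀ := thueMorse_two_mul m
  have h₁ := thueMorse_two_mul_add_one m
  have h₂ : thueMorse (2 * m + 2) = thueMorse (m + 1) := thueMorse_two_mul (m + 1)
  have h₃ : thueMorse (2 * m + 3) = !thueMorse (m + 1) := thueMorse_two_mul_add_one (m + 1)
  cases ha : thueMorse m <;> cases hb : thueMorse (m + 1) <;>
    simp [List.range_succ, mul_add, pairCode, tau, ha, hb, h₀, h₁, h₂, h₃]

theorem tauW_map_range_pairCode_thueMorse (L : ℕ) :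
    tauW ((List.range L).map (pairCode thueMorse)) =
      (List.range (2 * L + (thueMorse L).toNat)).map (pairCode thueMorse) := by
  induction L with
  | zero => rfl
  | succ L ih =>
    rw [map_range_pairCode_thueMorse_succ, ← ih]
    simp [tauW, List.range_succ]

theorem iterate_tauW_eq_map_range (k : ℕ) :
    ∃ L, k < L ∧ tauW^[k] [0] = (List.range L).map (pairCode thueMorse) := by
  induction k with
  | zero => exact ⟨1, Nat.one_pos, rfl⟩
  | succ k ih =>
    obtain ⟨L, hkL, h⟩ := ih
    refine ⟨2 * L + (thueMorse L).toNat, by omega, ?_⟩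
    rw [Function.iterate_succ_apply', h, tauW_map_range_pairCode_thueMorse]

theorem thue_eq_pairCode_thueMorse : thue = pairCode thueMorse := by
  funext n
  obtain ⟨L, hL, h⟩ := iterate_tauW_eq_map_range (n + 1)
  rw [thue, h, List.getD_eq_getElem _ _ (by simp; omega)]
  simp

theorem thue_infSquareFree : InfSquareFree thue := by
  rw [InfSquareFree, exists_infFactor_append_self_iff, thue_eq_pairCode_thueMorse]
  rintro ⟨m, p, hp, hsq⟩
  exact thueMorse_not_isOverlapAt hp hsq.isOverlapAt_of_pairCode

theorem pairCode_congr {f : ℕ → Bool} {m m' L : ℕ} (h : ∀ i < L + 1, f (m + i) = f (m' + i)) :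
    ∀ i < L, pairCode f (m + i) = pairCode f (m' + i) := by
  intro i hi
  simp only [pairCode, h i (by omega),
    show f (m + i + 1) = f (m' + i + 1) from h (i + 1) (by omega)]

theorem delTwoAt_congr {x y : ℕ → Fin 3} {n n' a K : ℕ} (hn : a ≤ n) (hn' : a ≤ n')
    (h : ∀ i < K + 2, x (n - a + i) = y (n' - a + i)) :
    ∀ i < K, delTwoAt x n (n - a + i) = delTwoAt y n' (n' - a + i) := by
  intro i hi
  unfold delTwoAt
  by_cases hia : i < a
  · rw [if_pos (by omega), if_pos (by omega)]
    exact h i (by omega)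
  · rw [if_neg (by omega), if_neg (by omega)]
    exact h (i + 2) (by omega)

theorem thueMorse_window_two_mul_add {L m m' b : ℕ}
    (h : ∀ i < L, thueMorse (m + i) = thueMorse (m' + i)) (hb : b < 2) :
    ∀ i < L, thueMorse (2 * m + b + i) = thueMorse (2 * m' + b + i) := by
  intro i hi
  rw [thueMorse_eq, thueMorse_eq (2 * m' + b + i),
    show (2 * m + b + i) % 2 = (2 * m' + b + i) % 2 by omega,
    show (2 * m + b + i) / 2 = m + (b + i) / 2 by omega,
    show (2 * m' + b + i) / 2 = m' + (b + i) / 2 by omega, h _ (by omega)]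

theorem thueMorse_window_recurrent {L N : ℕ} (hN : 0 < N)
    (h : ∀ m < 2 * N, ∃ m' < N, ∀ i < L, thueMorse (m + i) = thueMorse (m' + i)) (m : ℕ) :
    ∃ m' < N, ∀ i < L, thueMorse (m + i) = thueMorse (m' + i) := by
  induction m using Nat.strong_induction_on with
  | _ m ih =>
    rcases lt_or_ge m (2 * N) with hm | hm
    · exact h m hm
    obtain ⟨k, hk, hwk⟩ := ih (m / 2) (by omega)
    obtain ⟨m', hm', hw⟩ := h (2 * k + m % 2) (by omega)
    refine ⟨m', hm', fun i hi => ?_⟩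
    rw [← hw i hi, ← thueMorse_window_two_mul_add hwk (Nat.mod_lt _ two_pos) i hi, Nat.div_add_mod]

theorem hasSquareWithin_delTwoAt_thue {n : ℕ} (hn : 1 ≤ n) :
    HasSquareWithin (delTwoAt thue n) (n - 6) 12 := by
  have hcheck :
      ∀ n < 54, 1 ≤ n → HasSquareWithin (delTwoAt (pairCode thueMorse) n) (n - 6) 12 := by
    decide +kernel
  rw [thue_eq_pairCode_thueMorse]
  rcases lt_or_ge n 6 with h | h
  · exact hcheck n (by omega) hn
  obtain ⟨m, hm, hw⟩ := thueMorse_window_recurrent (L := 15) (N := 48) (by norm_num)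
    (by decide +kernel) (n - 6)
  refine (hcheck (m + 6) (by omega) (by omega)).congr ?_
  refine delTwoAt_congr le_add_self h (pairCode_congr fun i hi => ?_)
  rw [Nat.add_sub_cancel, hw i hi]

theorem thue_2irreducibly_squareFree :
    InfSquareFree thue ∧
      ∀ n : ℕ, 1 ≤ n →
        ∃ u : List (Fin 3), u ≠ [] ∧ InfFactor (u ++ u) (delTwoAt thue n) := by
  refine ⟨thue_infSquareFree, fun n hn => ?_⟩
  obtain ⟨s, -, p, -, hp, -, hsq⟩ := hasSquareWithin_delTwoAt_thue hn
  exact exists_infFactor_append_self_iff.2 ⟨_, p, hp, hsq⟩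
end
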